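/- Let P be a d-dimensional grid, and let c_1,...,c_d be positive integers satisfying c_i ≥ 12|P|^2 for every i ∈ [d], such that at least one of c_1,...,c_d is divisible by 2|P|. Then the d-dimensional grid [c_1] × ... × [c_d] can be partitioned into copies of P. -/
import Mathlib

/-- A subset `A` of a poset `Q` is a *copy* of the poset `P` if the subposet of `Q`
induced on `A` is order-isomorphic to `P`. -/
def IsCopy (P : Type*) [PartialOrder P] {Q : Type*} [PartialOrder Q] (A : Set Q) : Prop :=
  Nonempty (P ≃o A)

/-- The subset `T` of a poset `Q` is *partitioned into copies of `P`* if there is a family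
of pairwise disjoint copies of `P` in `Q` whose union is `T`. -/
def PartitionedIntoCopies (P : Type*) [PartialOrder P] {Q : Type*} [PartialOrder Q]
    (T : Set Q) : Prop :=
  ∃ 𝒞 : Set (Set Q), (∀ A ∈ 𝒞, IsCopy P A) ∧ 𝒞.PairwiseDisjoint id ∧ ⋃₀ 𝒞 = T

namespace GridTiling

/-! ### Tilings of posets by order-exact copies -/

/-- `Q` can be partitioned into order-exact copies of `P`, witnessed by a bijection
`I × P ≃ Q` which is order-exact on each fiber `{i} × P`. -/
def Tiles (P : Type) [PartialOrder P] (Q : Type) [PartialOrder Q] : Prop :=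
  ∃ (I : Type) (Φ : I × P ≃ Q), ∀ (i : I) (x y : P), Φ (i, x) ≤ Φ (i, y) ↔ x ≤ y

variable {P Q R P₁ P₂ Q₁ Q₂ : Type} [PartialOrder P] [PartialOrder Q] [PartialOrder R]
  [PartialOrder P₁] [PartialOrder P₂] [PartialOrder Q₁] [PartialOrder Q₂]

theorem Tiles.refl (P : Type) [PartialOrder P] : Tiles P P :=
  ⟨PUnit, Equiv.punitProd P, fun _ x y => by simp⟩

theorem Tiles.trans (h₁ : Tiles P Q) (h₂ : Tiles Q R) : Tiles P R := by
  obtain ⟨I₁, Φ₁, hΦ₁⟩ := h₁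
  obtain ⟨I₂, Φ₂, hΦ₂⟩ := h₂
  refine ⟨I₂ × I₁, ((Equiv.prodAssoc I₂ I₁ P).trans
    ((Equiv.refl I₂).prodCongr Φ₁)).trans Φ₂, fun i x y => ?_⟩
  simp only [Equiv.trans_apply, Equiv.prodAssoc_apply, Equiv.prodCongr_apply, Equiv.coe_refl,
    Prod.map_apply, id_eq]
  rw [hΦ₂, hΦ₁]

theorem Tiles.prod (h₁ : Tiles P₁ Q₁) (h₂ : Tiles P₂ Q₂) : Tiles (P₁ × P₂) (Q₁ × Q₂) := by
  obtain ⟨I₁, Φ₁, hΦ₁⟩ := h₁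
  obtain ⟨I₂, Φ₂, hΦ₂⟩ := h₂
  refine ⟨I₁ × I₂, (Equiv.prodProdProdComm I₁ I₂ P₁ P₂).trans (Φ₁.prodCongr Φ₂),
    fun i x y => ?_⟩
  simp only [Equiv.trans_apply, Equiv.prodProdProdComm_apply, Equiv.prodCongr_apply,
    Prod.map_apply]
  simp only [Prod.le_def, hΦ₁, hΦ₂]

theorem Tiles.congr_left (e : P ≃o P₁) (h : Tiles P Q) : Tiles P₁ Q := by
  obtain ⟨I, Φ, hΦ⟩ := h
  refine ⟨I, ((Equiv.refl I).prodCongr e.symm.toEquiv).trans Φ, fun i x y => ?_⟩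
  simp only [Equiv.trans_apply, Equiv.prodCongr_apply, Equiv.coe_refl, Prod.map_apply, id_eq]
  rw [hΦ, ← e.symm.le_iff_le]
  rfl

theorem Tiles.congr_right (e : Q ≃o Q₁) (h : Tiles P Q) : Tiles P Q₁ := by
  obtain ⟨I, Φ, hΦ⟩ := h
  refine ⟨I, Φ.trans e.toEquiv, fun i x y => ?_⟩
  simp only [Equiv.trans_apply]
  show e (Φ (i, x)) ≤ e (Φ (i, y)) ↔ x ≤ y
  rw [e.le_iff_le, hΦ]

/-- 1-D tiling: a chain of length `t*u` splits into `t` chains of length `u`. -/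
theorem tiles_fin (u t : ℕ) (hu : 0 < u) : Tiles (Fin u) (Fin (t * u)) := by
  refine ⟨Fin t, ⟨fun x => ⟨x.1.1 * u + x.2.1, ?_⟩,
    fun y => (⟨y.1 / u, ?_⟩, ⟨y.1 % u, Nat.mod_lt _ hu⟩), fun x => ?_, fun y => ?_⟩,
    fun i x y => ?_⟩
  · calc x.1.1 * u + x.2.1 < x.1.1 * u + u := by omega
    _ = (x.1.1 + 1) * u := by ring
    _ ≤ t * u := Nat.mul_le_mul_right _ x.1.2
  · exact (Nat.div_lt_iff_lt_mul hu).2 y.2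
  · obtain ⟨⟨i, hi⟩, ⟨s, hs⟩⟩ := x
    have h1 : (i * u + s) / u = i := by
      rw [mul_comm, Nat.mul_add_div hu, Nat.div_eq_of_lt hs, Nat.add_zero]
    have h2 : (i * u + s) % u = s := by
      rw [mul_comm, Nat.mul_add_mod, Nat.mod_eq_of_lt hs]
    simp only [h1, h2]
  · obtain ⟨y, hy⟩ := y
    have : y / u * u + y % u = y := by rw [mul_comm]; exact Nat.div_add_mod y u
    simp only [this]
  · show (⟨i.1 * u + x.1, _⟩ : Fin (t*u)) ≤ ⟨i.1 * u + y.1, _⟩ ↔ x ≤ y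
    rw [Fin.mk_le_mk, Fin.le_def]
    exact add_le_add_iff_left _

/-! ### The two-dimensional core construction

The box `[p*β] × [w]` (with `w ≥ β`) is partitioned into `w` order-exact copies of the
grid `[p] × [β]`: the `k`-th copy consists, in each of the `p` "slots" of `β` consecutive
columns, of one cell per logical row `u ∈ [β]`, namely at in-slot column `corePhi β k u`
and row `corePsi β w k u`.  For `k < β` these are punctured columns, for `k ≥ β` diagonals. -/

/-- Column index (within a slot) of the `u`-th cell of transversal `k`. -/
def corePhi (β k u : ℕ) : ℕ := if k < β then k else u

/-- Row index of the `u`-th cell of transversal `k`. -/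
def corePsi (β w k u : ℕ) : ℕ :=
  if k < β then (if k < u then u + (w - β) else u) else u + 1 + (k - β)

lemma corePhi_lt {β k u : ℕ} (hu : u < β) : corePhi β k u < β := by
  unfold corePhi; split_ifs <;> omega

lemma corePhi_mono {β k u u' : ℕ} (h : u ≤ u') : corePhi β k u ≤ corePhi β k u' := by
  unfold corePhi; split_ifs <;> omega

lemma corePsi_lt {β w k u : ℕ} (hu : u < β) (hk : k < w) (hw : β ≤ w) : corePsi β w k u < w := by
  unfold corePsi; split_ifs <;> omega

lemma corePsi_le_iff {β w k u u' : ℕ} (hu : u < β) (hu' : u' < β) :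
    corePsi β w k u ≤ corePsi β w k u' ↔ u ≤ u' := by
  unfold corePsi; split_ifs <;> omega

lemma core_first_le (β s s' φ φ' : ℕ) (hφ : φ < β) (hφ' : φ' < β) :
    s * β + φ ≤ s' * β + φ' ↔ (s < s' ∨ (s = s' ∧ φ ≤ φ')) := by
  rcases lt_trichotomy s s' with h | h | h
  · refine iff_of_true ?_ (Or.inl h)
    calc s * β + φ ≤ s * β + β := by omega
    _ = (s + 1) * β := by ring
    _ ≤ s' * β := Nat.mul_le_mul_right _ h
    _ ≤ s' * β + φ' := Nat.le_add_right _ _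
  · subst h
    rw [add_le_add_iff_left]
    simp
  · refine iff_of_false ?_ ?_
    · intro hle
      have h1 : (s' + 1) * β ≤ s * β := Nat.mul_le_mul_right _ h
      have h2 : s' * β + β ≤ s * β := by linarith [h1, (Nat.succ_mul s' β)]
      omega
    · rintro (h' | ⟨rfl, -⟩) <;> omega

/-- The core two-dimensional tiling: the box `[p*β] × [w]` is partitioned into `w`
order-exact copies of the grid `[p] × [β]`, whenever `w ≥ β`. -/
theorem tiles_core (p β w : ℕ) (hβ : 0 < β) (hw : β ≤ w) :
    Tiles (Fin p × Fin β) (Fin (p * β) × Fin w) := by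
  set f : Fin w × (Fin p × Fin β) → Fin (p * β) × Fin w := fun z =>
    (⟨z.2.1.1 * β + corePhi β z.1.1 z.2.2.1, by
        have h1 : corePhi β z.1.1 z.2.2.1 < β := corePhi_lt z.2.2.2
        calc z.2.1.1 * β + corePhi β z.1.1 z.2.2.1 < z.2.1.1 * β + β := by omega
        _ = (z.2.1.1 + 1) * β := by ring
        _ ≤ p * β := Nat.mul_le_mul_right _ z.2.1.2⟩,
     ⟨corePsi β w z.1.1 z.2.2.1, corePsi_lt z.2.2.2 z.1.2 hw⟩) with hf
  have hbij : Function.Bijective f := by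
    rw [Fintype.bijective_iff_surjective_and_card]
    constructor
    · rintro ⟨x, y⟩
      set c := x.1 % β with hcdef
      set s := x.1 / β with hsdef
      have hc : c < β := Nat.mod_lt _ hβ
      have hs : s < p := (Nat.div_lt_iff_lt_mul hβ).2 x.2
      have hx : s * β + c = x.1 := by rw [hsdef, hcdef, mul_comm]; exact Nat.div_add_mod _ _
      have hy : y.1 < w := y.2
      by_cases h1 : y.1 ≤ c
      · refine ⟨(⟨c, lt_of_lt_of_le hc hw⟩, ⟨s, hs⟩, ⟨y.1, lt_of_le_of_lt h1 hc⟩), ?_⟩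
        refine Prod.ext_iff.mpr ⟨Fin.ext ?_, Fin.ext ?_⟩
        · show s * β + corePhi β c y.1 = x.1
          unfold corePhi; rw [if_pos hc]; exact hx
        · show corePsi β w c y.1 = y.1
          unfold corePsi; rw [if_pos hc, if_neg (by omega)]
      · by_cases h2 : y.1 ≤ c + (w - β)
        · refine ⟨(⟨β + (y.1 - c - 1), by omega⟩, ⟨s, hs⟩, ⟨c, hc⟩), ?_⟩
          refine Prod.ext_iff.mpr ⟨Fin.ext ?_, Fin.ext ?_⟩
          · show s * β + corePhi β (β + (y.1 - c - 1)) c = x.1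
            unfold corePhi; rw [if_neg (by omega)]; exact hx
          · show corePsi β w (β + (y.1 - c - 1)) c = y.1
            unfold corePsi; rw [if_neg (by omega)]; omega
        · refine ⟨(⟨c, lt_of_lt_of_le hc hw⟩, ⟨s, hs⟩, ⟨y.1 - (w - β), by omega⟩), ?_⟩
          refine Prod.ext_iff.mpr ⟨Fin.ext ?_, Fin.ext ?_⟩
          · show s * β + corePhi β c (y.1 - (w - β)) = x.1
            unfold corePhi; rw [if_pos hc]; exact hx
          · show corePsi β w c (y.1 - (w - β)) = y.1
            unfold corePsi; rw [if_pos hc, if_pos (by omega)]; omega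
    · simp [mul_comm, mul_assoc, mul_left_comm]
  refine ⟨Fin w, Equiv.ofBijective f hbij, fun i x y => ?_⟩
  obtain ⟨s, u⟩ := x
  obtain ⟨s', u'⟩ := y
  simp only [Equiv.ofBijective_apply, hf, Prod.le_def, Fin.mk_le_mk, Fin.le_def]
  rw [core_first_le β s.1 s'.1 _ _ (corePhi_lt u.2) (corePhi_lt u'.2),
    corePsi_le_iff u.2 u'.2]
  constructor
  · rintro ⟨h1, h2⟩
    exact ⟨by omega, h2⟩
  · rintro ⟨h1, h2⟩
    have hm := corePhi_mono (β := β) (k := i.1) h2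
    exact ⟨by omega, h2⟩

/-! ### Order isomorphisms for rearranging grids -/

/-- Splitting off the `i₀`-th coordinate of a grid, as an order isomorphism. -/
def piSplitAt {m : ℕ} (i₀ : Fin (m+1)) (b : Fin (m+1) → ℕ) :
    (∀ i, Fin (b i)) ≃o Fin (b i₀) × (∀ i : Fin m, Fin (b (i₀.succAbove i))) where
  toEquiv := (Fin.insertNthEquiv (fun i => Fin (b i)) i₀).symm
  map_rel_iff' := by
    intro f g
    show (f i₀, Fin.removeNth i₀ f) ≤ (g i₀, Fin.removeNth i₀ g) ↔ f ≤ g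
    rw [Prod.le_def]
    constructor
    · rintro ⟨h1, h2⟩ i
      exact Fin.succAboveCases i₀ h1 h2 i
    · intro h
      exact ⟨h i₀, fun i => h _⟩

/-- A product with an empty grid factor, as an order isomorphism. -/
def prodPiEmpty (p : ℕ) (b : Fin 0 → ℕ) :
    (Fin p × (∀ i : Fin 0, Fin (b i))) ≃o Fin p where
  toEquiv := { toFun := fun x => x.1
               invFun := fun x => (x, fun i => i.elim0)
               left_inv := fun x => Prod.ext_iff.mpr ⟨rfl, funext fun i => i.elim0⟩
               right_inv := fun x => rfl }
  map_rel_iff' := by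
    intro f g
    show f.1 ≤ g.1 ↔ f ≤ g
    rw [Prod.le_def]
    exact ⟨fun h => ⟨h, fun i => i.elim0⟩, fun h => h.1⟩

variable {α β γ α' β' : Type*}

/-- Products of order isomorphisms. -/
def prodCongrIso [PartialOrder α] [PartialOrder α'] [PartialOrder β] [PartialOrder β']
    (e₁ : α ≃o α') (e₂ : β ≃o β') : (α × β) ≃o (α' × β') where
  toEquiv := e₁.toEquiv.prodCongr e₂.toEquiv
  map_rel_iff' := by
    intro x y
    show (e₁ x.1, e₂ x.2) ≤ (e₁ y.1, e₂ y.2) ↔ x ≤ y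
    simp [Prod.le_def, e₁.le_iff_le, e₂.le_iff_le]

/-- Associativity of products, as an order isomorphism. -/
def prodAssocIso (α β γ : Type*) [PartialOrder α] [PartialOrder β] [PartialOrder γ] :
    (α × β × γ) ≃o ((α × β) × γ) where
  toEquiv := (Equiv.prodAssoc α β γ).symm
  map_rel_iff' := by
    intro x y
    show ((x.1, x.2.1), x.2.2) ≤ ((y.1, y.2.1), y.2.2) ↔ x ≤ y
    simp [Prod.le_def, and_assoc]

/-- `α × (β × γ) ≃o (α × γ) × β`. -/
def prodShuffleIso (α β γ : Type*) [PartialOrder α] [PartialOrder β] [PartialOrder γ] :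
    (α × β × γ) ≃o ((α × γ) × β) :=
  (prodCongrIso (OrderIso.refl α) OrderIso.prodComm).trans (prodAssocIso α γ β)

/-- `(α × β) × γ ≃o (α × γ) × β`. -/
def prodSwapRightIso (α β γ : Type*) [PartialOrder α] [PartialOrder β] [PartialOrder γ] :
    ((α × β) × γ) ≃o ((α × γ) × β) :=
  ((prodAssocIso α β γ).symm.trans (prodShuffleIso α β γ))

/-! ### The main induction -/

/-- Main induction: the box `[t·p·∏aᵢ] × [c₁] × ⋯ × [c_m]` is partitioned into
order-exact copies of the grid `[p] × [a₁] × ⋯ × [a_m]` whenever `cᵢ ≥ aᵢ` for all `i`. -/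
theorem tiles_B (p t : ℕ) (hp : 0 < p) :
    ∀ (m : ℕ) (a c : Fin m → ℕ), (∀ i, 0 < a i) → (∀ i, a i ≤ c i) →
      Tiles (Fin p × ∀ i, Fin (a i)) (Fin (t * (p * ∏ i, a i)) × ∀ i, Fin (c i)) := by
  intro m
  induction m with
  | zero =>
      intro a c ha hc
      have hprod : t * (p * ∏ i : Fin 0, a i) = t * p := by simp
      have h1 : Tiles (Fin p) (Fin (t * (p * ∏ i : Fin 0, a i))) := by
        rw [hprod]; exact tiles_fin p t hp
      exact ((h1.congr_left (prodPiEmpty p a).symm).congr_right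
        (prodPiEmpty (t * (p * ∏ i : Fin 0, a i)) c).symm)
  | succ m IH =>
      intro a c ha hc
      set lst := Fin.last m with hlst
      have hL : t * (p * ∏ i, a i) =
          (t * (p * ∏ i : Fin m, a (lst.succAbove i))) * a lst := by
        rw [Fin.prod_univ_succAbove a lst]; ring
      rw [hL]
      have IH' := IH (fun i => a (lst.succAbove i)) (fun i => c (lst.succAbove i))
        (fun i => ha _) (fun i => hc _)
      have iso1 : (Fin p × ∀ i, Fin (a i)) ≃o
          ((Fin p × ∀ i : Fin m, Fin (a (lst.succAbove i))) × Fin (a lst)) :=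
        (prodCongrIso (OrderIso.refl (Fin p)) (piSplitAt lst a)).trans
          (prodShuffleIso _ _ _)
      have step1 := (IH'.prod (Tiles.refl (Fin (a lst)))).congr_left iso1.symm
      have core' := tiles_core (t * (p * ∏ i : Fin m, a (lst.succAbove i))) (a lst) (c lst)
        (ha lst) (hc lst)
      have step2 := (core'.prod (Tiles.refl (∀ i : Fin m, Fin (c (lst.succAbove i))))).congr_left
        (prodSwapRightIso _ _ _)
      have iso2 : (Fin ((t * (p * ∏ i : Fin m, a (lst.succAbove i))) * a lst) ×
          ∀ i, Fin (c i)) ≃o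
          ((Fin ((t * (p * ∏ i : Fin m, a (lst.succAbove i))) * a lst) × Fin (c lst)) ×
            ∀ i : Fin m, Fin (c (lst.succAbove i))) :=
        (prodCongrIso (OrderIso.refl _) (piSplitAt lst c)).trans (prodAssocIso _ _ _)
      exact step1.trans (step2.congr_right iso2.symm)

/-! ### From tilings to partitions into copies -/

theorem partitionedIntoCopies_of_tiles {P Q : Type} [PartialOrder P] [PartialOrder Q]
    (h : Tiles P Q) : PartitionedIntoCopies P (Set.univ : Set Q) := by
  obtain ⟨I, Φ, hΦ⟩ := h
  refine ⟨Set.range (fun i => {q | (Φ.symm q).1 = i}), ?_, ?_, ?_⟩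
  · rintro A ⟨i, rfl⟩
    refine ⟨⟨⟨fun x => ⟨Φ (i, x), by simp⟩, fun q => (Φ.symm q.1).2, fun x => by simp,
      fun q => ?_⟩, ?_⟩⟩
    · apply Subtype.ext
      show Φ (i, (Φ.symm q.1).2) = q.1
      have hq : (Φ.symm q.1).1 = i := q.2
      conv_rhs => rw [← Φ.apply_symm_apply q.1]
      exact congrArg Φ (Prod.ext_iff.mpr ⟨hq.symm, rfl⟩)
    · intro x y
      show (⟨Φ (i, x), _⟩ : {q // (Φ.symm q).1 = i}) ≤ ⟨Φ (i, y), _⟩ ↔ x ≤ y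
      rw [Subtype.mk_le_mk]
      exact hΦ i x y
  · rintro A ⟨i, rfl⟩ B ⟨i', rfl⟩ hne
    refine Set.disjoint_left.mpr ?_
    rintro q hq hq'
    have hq1 : (Φ.symm q).1 = i := hq
    have hq2 : (Φ.symm q).1 = i' := hq'
    have : i = i' := by rw [← hq1, ← hq2]
    subst this
    exact hne rfl
  · ext q
    simp only [Set.mem_sUnion, Set.mem_range, Set.mem_univ, iff_true]
    exact ⟨{q' | (Φ.symm q').1 = (Φ.symm q).1}, ⟨(Φ.symm q).1, rfl⟩, rfl⟩

end GridTiling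

open GridTiling in
/-- Let `P` be the `d`-dimensional grid `[a 1] × ... × [a d]` (modelled as `∀ i, Fin (a i)`
with the componentwise order, `|P| = ∏ i, a i`), and let `c 1, ..., c d` be positive
integers with `c i ≥ 12 |P|^2` for every `i`, at least one of which is divisible by
`2|P|`. Then the `d`-dimensional grid `[c 1] × ... × [c d]` can be partitioned into
copies of `P`. -/
theorem grid_partition_of_divisible_side (d : ℕ) (hd : 0 < d)
    (a : Fin d → ℕ) (ha : ∀ i, 0 < a i)
    (c : Fin d → ℕ) (hc : ∀ i, 12 * (∏ i, a i) ^ 2 ≤ c i)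
    (hdvd : ∃ i, 2 * (∏ i, a i) ∣ c i) :
    PartitionedIntoCopies (∀ i, Fin (a i))
      (Set.univ : Set (∀ i, Fin (c i))) := by
  obtain ⟨i₀, hdvd⟩ := hdvd
  obtain ⟨m, rfl⟩ : ∃ m, d = m + 1 := ⟨d - 1, by omega⟩
  have hn0 : 0 < ∏ i, a i := Finset.prod_pos (fun i _ => ha i)
  have hc' : ∀ i, a i ≤ c i := by
    intro i
    have h1 : a i ≤ ∏ j, a j :=
      Finset.single_le_prod' (fun j _ => Nat.one_le_iff_ne_zero.mpr (ha j).ne') (Finset.mem_univ i)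
    have h2 : ∏ j, a j ≤ 12 * (∏ j, a j) ^ 2 := by nlinarith
    exact le_trans h1 (le_trans h2 (hc i))
  obtain ⟨t, ht⟩ := hdvd
  have ht0 : 0 < t := by
    rcases Nat.eq_zero_or_pos t with h | h
    · exfalso
      rw [h, mul_zero] at ht
      have := hc i₀
      rw [ht] at this
      nlinarith
    · exact h
  have hsplit : c i₀ = t * (2 * a i₀ * ∏ i : Fin m, a (i₀.succAbove i)) := by
    rw [ht, Fin.prod_univ_succAbove a i₀]; ring
  have T1 : Tiles (Fin (a i₀) × ∀ i : Fin m, Fin (a (i₀.succAbove i)))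
      (Fin (2 * a i₀) × ∀ i : Fin m, Fin (a (i₀.succAbove i))) :=
    (tiles_fin (a i₀) 2 (ha i₀)).prod (Tiles.refl _)
  have T2 := tiles_B (2 * a i₀) t (by have := ha i₀; omega) m (fun i => a (i₀.succAbove i))
    (fun i => c (i₀.succAbove i)) (fun i => ha _) (fun i => hc' _)
  have T3 := T1.trans T2
  rw [← hsplit] at T3
  exact partitionedIntoCopies_of_tiles
    ((T3.congr_left (piSplitAt i₀ a).symm).congr_right (piSplitAt i₀ c).symm)
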